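/- Let f, g ∈ K[[x_1,...,x_n]] with ord(f) = s ≥ 2, μ(f) < ∞, and s' = ord(j(f)). If M_k(f) ≅ M_k(g) as K[[t]]-algebras for some k with m^{⌊(k+s+s'+1)/2⌋} ⊆ m^2 j(f), then f is right equivalent to g. (Assuming the lifting lemma and the BGM right-determinacy theorem: if m^{l+2} ⊆ m^2 j(f) then f is right (2l − ord(f) + 2)-determined.) -/

import Mathlib

noncomputable section

/-- The formal power series ring `K[[x_1,...,x_n]]`. -/
abbrev PS (K : Type*) [Field K] (n : ℕ) := MvPowerSeries (Fin n) K

/-- The maximal ideal `m` of `K[[x]]` (power series with zero constant term). -/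
def mx (K : Type*) [Field K] (n : ℕ) : Ideal (PS K n) :=
  RingHom.ker (MvPowerSeries.constantCoeff (σ := Fin n) (R := K))

/-- The `i`-th formal partial derivative of a power series. -/
def pd {K : Type*} [Field K] {n : ℕ} (i : Fin n) (f : PS K n) : PS K n :=
  fun e => (e i + 1 : ℕ) • MvPowerSeries.coeff (R := K) (e + Finsupp.single i 1) f

/-- The Jacobian ideal `j(f) = ⟨∂f/∂x_1, ..., ∂f/∂x_n⟩`. -/
def jId {K : Type*} [Field K] {n : ℕ} (f : PS K n) : Ideal (PS K n) :=
  Ideal.span (Set.range fun i => pd i f)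

/-- The Tjurina ideal `tj(f) = ⟨f⟩ + j(f)`. -/
def tjId {K : Type*} [Field K] {n : ℕ} (f : PS K n) : Ideal (PS K n) :=
  Ideal.span {f} ⊔ jId f

/-- The ideal defining the `k`-th Tjurina algebra: `⟨f, m^k j(f)⟩`. -/
def TkId {K : Type*} [Field K] {n : ℕ} (k : ℕ) (f : PS K n) : Ideal (PS K n) :=
  Ideal.span {f} ⊔ (mx K n) ^ k * jId f

/-- The ideal defining the `k`-th Milnor algebra: `m^k j(f)`. -/
def MkId {K : Type*} [Field K] {n : ℕ} (k : ℕ) (f : PS K n) : Ideal (PS K n) :=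
  (mx K n) ^ k * jId f

/-- Contact equivalence: `g = u · φ(f)`. -/
def ContactEquiv {K : Type*} [Field K] {n : ℕ} (f g : PS K n) : Prop :=
  ∃ (φ : PS K n ≃ₐ[K] PS K n) (u : (PS K n)ˣ), g = (u : PS K n) * φ f

/-- Right equivalence: `g = φ(f)`. -/
def RightEquiv {K : Type*} [Field K] {n : ℕ} (f g : PS K n) : Prop :=
  ∃ φ : PS K n ≃ₐ[K] PS K n, g = φ f

/-- `f` is contact `N`-determined. -/
def ContactDetermined {K : Type*} [Field K] {n : ℕ} (N : ℕ) (f : PS K n) : Prop :=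
  ∀ g : PS K n, g - f ∈ (mx K n) ^ (N + 1) → ContactEquiv f g

/-- `f` is right `N`-determined. -/
def RightDetermined {K : Type*} [Field K] {n : ℕ} (N : ℕ) (f : PS K n) : Prop :=
  ∀ g : PS K n, g - f ∈ (mx K n) ^ (N + 1) → RightEquiv f g

/-!
The lifting lemma turns the isomorphism `M_k(f) ≅ M_k(g)` into an automorphism `θ` with
`θ(m^k j(f)) = m^k j(g)` and `θ(f) ≡ g` modulo that ideal; since `j(f) ⊆ m^{s'}`, the series
`θ⁻¹(g)` agrees with `f` modulo `m^{k+s'}`. For `q = ⌊(k+s+s'+1)/2⌋` the hypothesis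
`m^q ⊆ m^2 j(f) ⊆ m^{s'+2}` gives `q ≥ s' + 2`, so BGM applies with `l = q - 2`, and `f` is right
`(2l - s + 2)`-determined. Since differentiation lowers the order, `j(f) ⊆ m^{s-1}` and so
`s' ≥ s - 1`; this gives `k ≥ 2`, so that the lifting lemma applies to `m^k j(f), m^k j(g) ⊆ m`,
and `2l - s + 3 ≤ k + s'`.
-/

open MvPowerSeries

theorem Derivation.mem_pow_of_mem_pow_succ {R A : Type*} [CommRing R] [CommRing A] [Algebra R A]
    (D : Derivation R A A) (I : Ideal A) :
    ∀ (d : ℕ) {x : A}, x ∈ I ^ (d + 1) → D x ∈ I ^ d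
  | 0, _, _ => by simp
  | d + 1, x, hx => by
    rw [pow_succ'] at hx
    induction hx using Submodule.mul_induction_on' with
    | mem_mul_mem a ha b hb =>
      rw [D.leibniz]
      refine add_mem ?_ (Ideal.mul_mem_right _ _ hb)
      rw [pow_succ']
      exact Ideal.mul_mem_mul ha (D.mem_pow_of_mem_pow_succ I d hb)
    | add x _ y _ hx hy => rw [map_add]; exact add_mem hx hy

section

variable {K : Type*} [Field K] {n : ℕ}

theorem mx_eq_maximalIdeal : mx K n = IsLocalRing.maximalIdeal (PS K n) := by
  ext f
  rw [IsLocalRing.mem_maximalIdeal, mem_nonunits_iff, isUnit_iff_constantCoeff,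
    isUnit_iff_ne_zero, not_not]
  rfl

theorem map_mx (θ : PS K n ≃ₐ[K] PS K n) : (mx K n).map θ = mx K n := by
  change Ideal.map ((θ : PS K n ≃+* PS K n) : PS K n →+* PS K n) _ = _
  rw [mx_eq_maximalIdeal, Ideal.map_comap_of_equiv]
  exact IsLocalRing.maximalIdeal_comap ((θ.symm : PS K n ≃+* PS K n) : PS K n →+* PS K n)

theorem mx_zero_eq_bot : mx K 0 = ⊥ := by
  rw [eq_bot_iff]
  intro f hf
  ext e
  rw [Subsingleton.elim e 0]
  exact hf

theorem le_order_of_mem_mx_pow {f : PS K n} : ∀ {d : ℕ}, f ∈ mx K n ^ d → (d : ℕ∞) ≤ f.order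
  | 0, _ => by simp
  | d + 1, hf => by
    rw [pow_succ'] at hf
    induction hf using Submodule.mul_induction_on' with
    | mem_mul_mem a ha b hb =>
      calc ((d + 1 : ℕ) : ℕ∞) = 1 + d := by push_cast; ring
        _ ≤ a.order + b.order :=
          add_le_add (one_le_order_iff_constCoeff_eq_zero.mpr ha) (le_order_of_mem_mx_pow hb)
        _ ≤ (a * b).order := le_order_mul
    | add x _ y _ hx hy => exact le_trans (le_min hx hy) min_order_le_add

theorem mx_pow_le_mx_pow_iff (hn : 0 < n) {a b : ℕ} : mx K n ^ a ≤ mx K n ^ b ↔ b ≤ a := by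
  refine ⟨fun h => ?_, Ideal.pow_le_pow_right⟩
  have hX : (X ⟨0, hn⟩ : PS K n) ^ a ∈ mx K n ^ a :=
    Ideal.pow_mem_pow (by simp [mx]) a
  have := le_order_of_mem_mx_pow (h hX)
  rwa [X_pow_eq, order_monomial_of_ne_zero one_ne_zero, Finsupp.degree_single, Nat.cast_le] at this

theorem pd_eq_pderiv (i : Fin n) (f : PS K n) : pd i f = pderiv K i f := by
  ext e
  change (e i + 1 : ℕ) • coeff (e + Finsupp.single i 1) f = _
  rw [coeff_pderiv, nsmul_eq_mul, mul_comm]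
  push_cast
  rfl

theorem jId_le_mx_pow {f : PS K n} {d : ℕ} (hf : f ∈ mx K n ^ (d + 1)) : jId f ≤ mx K n ^ d := by
  rw [jId, Ideal.span_le]
  rintro _ ⟨i, rfl⟩
  change pd i f ∈ _
  rw [pd_eq_pderiv]
  exact (pderiv K i).mem_pow_of_mem_pow_succ _ d hf

theorem pos_of_mem_mx_pow_of_notMem {f : PS K n} {s : ℕ} (hs : s ≠ 0) (hf : f ∈ mx K n ^ s)
    (hf' : f ∉ mx K n ^ (s + 1)) : 0 < n := by
  refine Nat.pos_of_ne_zero fun hn => ?_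
  subst hn
  rw [mx_zero_eq_bot, Ideal.bot_pow hs] at hf
  rw [mx_zero_eq_bot, Ideal.bot_pow s.succ_ne_zero] at hf'
  exact hf' hf

theorem apply_mem_mx_pow (θ : PS K n ≃ₐ[K] PS K n) {c : ℕ} {x : PS K n} (hx : x ∈ mx K n ^ c) :
    θ x ∈ mx K n ^ c := by
  simpa only [Ideal.map_pow, map_mx] using Ideal.mem_map_of_mem θ hx

theorem MkId_le_mx {k : ℕ} (hk : k ≠ 0) (f : PS K n) : MkId k f ≤ mx K n :=
  Ideal.mul_le_left.trans (Ideal.pow_le_self hk)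

theorem map_MkId_le (θ : PS K n ≃ₐ[K] PS K n) {f : PS K n} {k s' : ℕ}
    (hs' : jId f ≤ mx K n ^ s') : (MkId k f).map θ ≤ mx K n ^ (k + s') := by
  rw [MkId, Ideal.map_mul, Ideal.map_pow, map_mx, pow_add]
  refine Ideal.mul_mono_right ((Ideal.map_mono hs').trans ?_)
  rw [Ideal.map_pow, map_mx]

theorem symm_apply_sub_mem_of_map_MkId (θ : PS K n ≃ₐ[K] PS K n) {f g : PS K n} {k s' : ℕ}
    (hθ : (MkId k f).map θ = MkId k g)
    (hθf : Ideal.Quotient.mk (MkId k g) (θ f) = Ideal.Quotient.mk (MkId k g) g)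
    (hs' : jId f ≤ mx K n ^ s') : θ.symm g - f ∈ mx K n ^ (k + s') := by
  have hg : g - θ f ∈ mx K n ^ (k + s') :=
    map_MkId_le θ hs' (hθ ▸ Ideal.Quotient.eq.mp hθf.symm)
  simpa using apply_mem_mx_pow θ.symm hg

end

theorem stmt_10_general {K : Type*} [Field K] {n : ℕ} (f g : PS K n)
    (s s' k : ℕ) (hs : 2 ≤ s)
    (hf : f ∈ (mx K n) ^ s) (hf' : f ∉ (mx K n) ^ (s + 1))
    (hs' : jId f ≤ (mx K n) ^ s') (hs'' : ¬ jId f ≤ (mx K n) ^ (s' + 1))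
    (hlift : ∀ I J : Ideal (PS K n), I ≤ mx K n → J ≤ mx K n →
      ∀ e : (PS K n ⧸ I) ≃ₐ[K] (PS K n ⧸ J),
        ∃ θ : PS K n ≃ₐ[K] PS K n, Ideal.map θ I = J ∧
          ∀ h : PS K n, Ideal.Quotient.mk J (θ h) = e (Ideal.Quotient.mk I h))
    (hBGM : ∀ l : ℕ, (mx K n) ^ (l + 2) ≤ (mx K n) ^ 2 * jId f →
      RightDetermined (2 * l - s + 2) f)
    (hsub : (mx K n) ^ ((k + s + s' + 1) / 2) ≤ (mx K n) ^ 2 * jId f)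
    (hiso : ∃ e : (PS K n ⧸ MkId k f) ≃ₐ[K] (PS K n ⧸ MkId k g),
      e (Ideal.Quotient.mk (MkId k f) f) = Ideal.Quotient.mk (MkId k g) g) :
    RightEquiv f g := by
  obtain ⟨e, he⟩ := hiso
  have hn : 0 < n := pos_of_mem_mx_pow_of_notMem (by omega) hf hf'
  have hq : s' + 2 ≤ (k + s + s' + 1) / 2 := by
    refine (mx_pow_le_mx_pow_iff hn).mp (hsub.trans ?_)
    rw [add_comm, pow_add]
    exact Ideal.mul_mono_right hs'
  have hss' : s - 1 ≤ s' := by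
    by_contra! h
    refine hs'' ((jId_le_mx_pow (d := s - 1) ?_).trans (Ideal.pow_le_pow_right h))
    rwa [Nat.sub_add_cancel (by omega)]
  obtain ⟨θ, hθ, hθf⟩ := hlift _ _ (MkId_le_mx (by omega) f) (MkId_le_mx (by omega) g) e
  have hdet := hBGM ((k + s + s' + 1) / 2 - 2) (by rwa [Nat.sub_add_cancel (by omega)])
  obtain ⟨ψ, hψ⟩ := hdet (θ.symm g) (Ideal.pow_le_pow_right (by omega)
    (symm_apply_sub_mem_of_map_MkId θ hθ (by rw [hθf f, he]) hs'))
  exact ⟨ψ.trans θ, by simp [← hψ]⟩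

/-- if `M_k(f) ≅ M_k(g)` as `K[[t]]`-algebras for some `k` with
`m^{⌊(k+s+s'+1)/2⌋} ⊆ m^2 j(f)`, then `f` and `g` are right equivalent
(assuming the lifting lemma and the BGM right determinacy theorem). -/
theorem stmt_10 {K : Type*} [Field K] [IsAlgClosed K] {n : ℕ} (f g : PS K n)
    (s s' k : ℕ) (hs : 2 ≤ s)
    (hf : f ∈ (mx K n) ^ s) (hf' : f ∉ (mx K n) ^ (s + 1))
    (hs' : jId f ≤ (mx K n) ^ s') (hs'' : ¬ jId f ≤ (mx K n) ^ (s' + 1))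
    (hmu : FiniteDimensional K (PS K n ⧸ jId f))
    (hlift : ∀ I J : Ideal (PS K n), I ≤ mx K n → J ≤ mx K n →
      ∀ e : (PS K n ⧸ I) ≃ₐ[K] (PS K n ⧸ J),
        ∃ θ : PS K n ≃ₐ[K] PS K n, Ideal.map θ I = J ∧
          ∀ h : PS K n, Ideal.Quotient.mk J (θ h) = e (Ideal.Quotient.mk I h))
    (hBGM : ∀ l : ℕ, (mx K n) ^ (l + 2) ≤ (mx K n) ^ 2 * jId f →
      RightDetermined (2 * l - s + 2) f)
    (hsub : (mx K n) ^ ((k + s + s' + 1) / 2) ≤ (mx K n) ^ 2 * jId f)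
    (hiso : ∃ e : (PS K n ⧸ MkId k f) ≃ₐ[K] (PS K n ⧸ MkId k g),
      e (Ideal.Quotient.mk (MkId k f) f) = Ideal.Quotient.mk (MkId k g) g) :
    RightEquiv f g :=
  stmt_10_general f g s s' k hs hf hf' hs' hs'' hlift hBGM hsub hiso
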